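/- arXiv:2509.19074 — 3 statements merged into one kernel-verified Lean document; each statement's English description precedes it below -/
import Mathlib

section
/- If φ : E → E' is an injective group homomorphism whose image has finite index in E', then fr(E) = φ⁻¹(fr(E')). -/
/-- The finite residual of a group: the intersection of all finite-index normal subgroups. -/
def finiteResidual (G : Type*) [Group G] : Subgroup G :=
  ⨅ (H : Subgroup G) (_ : H.Normal) (_ : H.FiniteIndex), H

/-- If `φ : E → E'` is an injective group homomorphism whose image has finite index in `E'`,
then `fr(E) = φ⁻¹(fr(E'))`. -/
theorem finiteResidual_eq_comap_of_injective_of_finiteIndex {E E' : Type*} [Group E] [Group E']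
    (φ : E →* E') (hinj : Function.Injective φ) (hfi : φ.range.FiniteIndex) :
    finiteResidual E = (finiteResidual E').comap φ := by
  apply le_antisymm
  · intro x hx
    simp only [finiteResidual, Subgroup.mem_comap, Subgroup.mem_iInf] at hx ⊢
    intro N' hN' hfiN'
    have h1 : (N'.comap φ).Normal := hN'.comap φ
    have h2 : (N'.comap φ).FiniteIndex := by
      constructor
      rw [Subgroup.index_comap]
      have hdvd : N'.relIndex φ.range ∣ N'.index := Subgroup.relIndex_dvd_index_of_normal N' _
      intro h
      rw [h] at hdvd
      exact hfiN'.index_ne_zero (Nat.eq_zero_of_zero_dvd hdvd)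
    exact hx _ h1 h2
  · intro x hx
    simp only [finiteResidual, Subgroup.mem_comap, Subgroup.mem_iInf] at hx ⊢
    intro N hN hfiN
    have hmap : (N.map φ).FiniteIndex := by
      constructor
      rw [Subgroup.index_map, (MonoidHom.ker_eq_bot_iff φ).mpr hinj, sup_bot_eq]
      exact Nat.mul_ne_zero hfiN.index_ne_zero hfi.index_ne_zero
    have key := hx (N.map φ).normalCore (Subgroup.normalCore_normal _)
      (@Subgroup.finiteIndex_normalCore _ _ _ hmap)
    have : φ x ∈ N.map φ := Subgroup.normalCore_le _ key
    have h := Subgroup.comap_map_eq_self_of_injective hinj N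
    rw [← h, Subgroup.mem_comap]
    exact this
end

section
/- Let G be a group with finitely generated abelianisation and fr(G) = {1}, let A be a finitely generated abelian group, and let 1 → A → E → G → 1 be a central extension that is pulled back from an abelian extension 1 → A → E' → G^{ab} → 1 along the abelianisation map G → G^{ab}. Then fr(E) = {1}. -/
section FiniteResidual

variable {G H : Type*} [Group G] [Group H]

theorem mem_finiteResidual_iff {g : G} :
    g ∈ finiteResidual G ↔ ∀ K : FiniteIndexNormalSubgroup G, g ∈ K := by
  simp only [finiteResidual, Subgroup.mem_iInf]
  exact ⟨fun h K => h K K.isNormal' K.isFiniteIndex', fun h K hK hK' => h ⟨K, hK, hK'⟩⟩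

theorem finiteResidual_eq_bot_iff : finiteResidual G = ⊥ ↔ Group.ResiduallyFinite G := by
  rw [Group.residuallyFinite_iff_forall_finiteIndexNormalSubgroup, Subgroup.eq_bot_iff_forall]
  simp only [mem_finiteResidual_iff]

theorem map_finiteResidual_le (f : G →* H) : (finiteResidual G).map f ≤ finiteResidual H := by
  rintro _ ⟨g, hg, rfl⟩
  exact mem_finiteResidual_iff.mpr fun K => mem_finiteResidual_iff.mp hg (K.comap f)

end FiniteResidual

namespace Group.ResiduallyFinite

theorem of_injective {G H : Type*} [Group G] [Group H] [ResiduallyFinite H] {f : G →* H}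
    (hf : Function.Injective f) : ResiduallyFinite G := by
  refine residuallyFinite_iff_forall_finiteIndexNormalSubgroup.mpr fun g hg => hf ?_
  rw [map_one]
  exact eq_one_iff_forall_finiteIndexNormalSubroup (f g) fun K => hg (K.comap f)

instance pi {ι : Type*} {G : ι → Type*} [∀ i, Group (G i)] [∀ i, ResiduallyFinite (G i)] :
    ResiduallyFinite (∀ i, G i) := by
  refine residuallyFinite_iff_forall_finiteIndexNormalSubgroup.mpr fun g hg => funext fun i => ?_
  exact eq_one_iff_forall_finiteIndexNormalSubroup (g i) fun K =>
    hg (K.comap (Pi.evalMonoidHom G i))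

instance multiplicativeInt : ResiduallyFinite (Multiplicative ℤ) := by
  refine residuallyFinite_of_forall_exists_finite_monoidHom fun g hg => ?_
  have hk : g.toAdd ≠ 0 := hg
  refine ⟨Multiplicative (ZMod (g.toAdd.natAbs + 1)), inferInstance, inferInstance,
    (Int.castAddHom _).toMultiplicative, fun h => hk ?_⟩
  have hdvd : ((g.toAdd.natAbs + 1 : ℕ) : ℤ) ∣ g.toAdd :=
    (ZMod.intCast_zmod_eq_zero_iff_dvd _ _).mp (congrArg Multiplicative.toAdd h)
  exact Int.eq_zero_of_dvd_of_natAbs_lt_natAbs hdvd <| by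
    rw [Int.natAbs_natCast]
    exact Nat.lt_succ_self _

instance of_fg_commGroup (A : Type*) [CommGroup A] [FG A] : ResiduallyFinite A := by
  obtain ⟨ι, j, _, _, p, hp, e, ⟨σ⟩⟩ :=
    CommGroup.equiv_free_prod_prod_multiplicative_zmod A
  have : ∀ i, NeZero (p i ^ e i) := fun i => ⟨pow_ne_zero _ (hp i).ne_zero⟩
  exact of_injective (f := σ.toMonoidHom) σ.injective

end Group.ResiduallyFinite

theorem Group.fg_of_surjective_of_fg_ker {G H : Type*} [Group G] [Group H] [FG H] {f : G →* H}
    (hf : Function.Surjective f) (hker : FG f.ker) : FG G := by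
  obtain ⟨S, hS, hSfin⟩ := Group.fg_iff.mp ‹FG H›
  set T := Function.surjInv hf '' S
  have hT : (Subgroup.closure T).map f = ⊤ := by
    rw [MonoidHom.map_closure, ← Set.image_comp, (Function.rightInverse_surjInv hf).comp_eq_id,
      Set.image_id, hS]
  have htop : Subgroup.closure T ⊔ f.ker = ⊤ := by
    rw [← Subgroup.comap_map_eq, hT, Subgroup.comap_top]
  rw [Group.fg_def, ← htop]
  exact Subgroup.FG.sup ⟨(hSfin.image _).toFinset, by rw [Set.Finite.coe_toFinset]⟩
    ((fg_iff_subgroup_fg _).mp hker)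

theorem finiteResidual_eq_bot_of_pullback_abelian_extension_general
    {E G E' : Type*} [Group E] [Group G] [CommGroup E']
    (π : E →* G) (hπ : Function.Surjective π)
    (hA : Group.FG π.ker)
    (hab : Group.FG (Abelianization G))
    (hG : finiteResidual G = ⊥)
    (p' : E' →* Abelianization G) (f : E →* E')
    (hover : ∀ x : E, p' (f x) = Abelianization.of (π x))
    (hinjA : ∀ a ∈ π.ker, ∀ b ∈ π.ker, f a = f b → a = b)
    (hkerA : Subgroup.map f π.ker = p'.ker) :
    finiteResidual E = ⊥ := by
  have hp' : Function.Surjective p' := by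
    refine Function.Surjective.of_comp (g := f) ?_
    rw [show p' ∘ f = Abelianization.of ∘ π from funext hover]
    exact QuotientGroup.mk_surjective.comp hπ
  have hE' : Group.FG E' := Group.fg_of_surjective_of_fg_ker hp' <|
    hkerA ▸ Group.fg_of_surjective (f.subgroupMap_surjective π.ker)
  have hfrE' : finiteResidual E' = ⊥ := finiteResidual_eq_bot_iff.mpr inferInstance
  rw [eq_bot_iff]
  rintro x hx
  have hxA : x ∈ π.ker := by
    simpa [hG] using map_finiteResidual_le π ⟨x, hx, rfl⟩
  have hfx : f x = 1 := by
    simpa [hfrE'] using map_finiteResidual_le f ⟨x, hx, rfl⟩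
  exact hinjA x hxA 1 (one_mem _) (by rw [hfx, map_one])

/-- Let `G` be a group with finitely generated abelianisation and trivial finite residual,
`A = ker π` a finitely generated central subgroup of `E` with `E/A ≅ G` (via a surjection
`π : E → G`), and suppose the central extension `1 → A → E → G → 1` is pulled back from an
abelian extension `1 → A → E' → G^ab → 1` along the abelianisation map `G → G^ab`
(witnessed by a homomorphism `f : E → E'` over `G → G^ab` restricting to an isomorphism
of `A = ker π` onto `ker p'`). Then `fr(E) = {1}`. -/
theorem finiteResidual_eq_bot_of_pullback_abelian_extension
    {E G E' : Type*} [Group E] [Group G] [CommGroup E']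
    (π : E →* G) (hπ : Function.Surjective π)
    (hcent : π.ker ≤ Subgroup.center E)
    (hA : Group.FG π.ker)
    (hab : Group.FG (Abelianization G))
    (hG : finiteResidual G = ⊥)
    (p' : E' →* Abelianization G) (f : E →* E')
    (hover : ∀ x : E, p' (f x) = Abelianization.of (π x))
    (hinjA : ∀ a ∈ π.ker, ∀ b ∈ π.ker, f a = f b → a = b)
    (hkerA : Subgroup.map f π.ker = p'.ker) :
    finiteResidual E = ⊥ :=
  finiteResidual_eq_bot_of_pullback_abelian_extension_general π hπ hA hab hG p' f hover hinjA hkerA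
end

section
/- Let C₀₁, C₀, C₁ be categories and κ_i : C₀₁ → C_i (i = 0, 1) fully faithful functors admitting right adjoints ∂_i : C_i → C₀₁. Then the canonical functor ι from the pushout C₀ ⊔_{C₀₁} C₁ (of the κ_i) to the pullback C₀ ×_{C₀₁} C₁ (of the ∂_i), induced by (id, κ₁∂₀) on C₀ and (κ₀∂₁, id) on C₁, is fully faithful. -/
open CategoryTheory

universe u

variable {C01 C0 C1 : Type u} [SmallCategory C01] [SmallCategory C0] [SmallCategory C1]

/-- The pseudo-pullback (iso-comma category) `C₀ ×_{C₀₁} C₁` of two functors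
`r₀ : C₀ → C₀₁` and `r₁ : C₁ → C₀₁`: objects are pairs `(d₀, d₁)` together with an
isomorphism `r₀(d₀) ≅ r₁(d₁)`. -/
structure PsPullback (r₀ : C0 ⥤ C01) (r₁ : C1 ⥤ C01) : Type u where
  left : C0
  right : C1
  iso : r₀.obj left ≅ r₁.obj right

namespace PsPullback

variable {r₀ : C0 ⥤ C01} {r₁ : C1 ⥤ C01}

instance : Category (PsPullback r₀ r₁) where
  Hom x y := {p : (x.left ⟶ y.left) × (x.right ⟶ y.right) //
    r₀.map p.1 ≫ y.iso.hom = x.iso.hom ≫ r₁.map p.2}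
  id x := ⟨⟨𝟙 _, 𝟙 _⟩, by simp⟩
  comp {x y z} f g := ⟨⟨f.1.1 ≫ g.1.1, f.1.2 ≫ g.1.2⟩, by
    rw [Functor.map_comp, Functor.map_comp, Category.assoc, g.2, ← Category.assoc, f.2,
      Category.assoc]⟩
  id_comp f := Subtype.ext (Prod.ext (by simp) (by simp))
  comp_id f := Subtype.ext (Prod.ext (by simp) (by simp))
  assoc f g h := Subtype.ext (Prod.ext (by simp) (by simp))

end PsPullback

/-- The canonical functor `C₀ → C₀ ×_{C₀₁} C₁` given on objects by `d₀ ↦ (d₀, κ₁ r₀ d₀)`,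
using the unit isomorphism of the adjunction `κ₁ ⊣ r₁` (an iso since `κ₁` is fully
faithful). -/
noncomputable def iotaLeft (r₀ : C0 ⥤ C01) {κ₁ : C01 ⥤ C1} {r₁ : C1 ⥤ C01}
    (adj₁ : κ₁ ⊣ r₁) [κ₁.Full] [κ₁.Faithful] : C0 ⥤ PsPullback r₀ r₁ where
  obj d := ⟨d, κ₁.obj (r₀.obj d), asIso (adj₁.unit.app (r₀.obj d))⟩
  map {d d'} f := ⟨⟨f, κ₁.map (r₀.map f)⟩, by
    simpa using (adj₁.unit.naturality (r₀.map f))⟩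
  map_id d := by
    apply Subtype.ext
    show (_, _) = (_, _)
    simp
  map_comp f g := by
    apply Subtype.ext
    show (_, _) = (_, _)
    simp

/-- The canonical functor `C₁ → C₀ ×_{C₀₁} C₁` given on objects by `d₁ ↦ (κ₀ r₁ d₁, d₁)`,
using the inverse of the unit isomorphism of the adjunction `κ₀ ⊣ r₀`. -/
noncomputable def iotaRight {κ₀ : C01 ⥤ C0} {r₀ : C0 ⥤ C01} (adj₀ : κ₀ ⊣ r₀)
    [κ₀.Full] [κ₀.Faithful] (r₁ : C1 ⥤ C01) : C1 ⥤ PsPullback r₀ r₁ where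
  obj d := ⟨κ₀.obj (r₁.obj d), d, (asIso (adj₀.unit.app (r₁.obj d))).symm⟩
  map {d d'} f := ⟨⟨κ₀.map (r₁.map f), f⟩, by
    have h := adj₀.unit.naturality (r₁.map f)
    dsimp at h ⊢
    rw [IsIso.comp_inv_eq, Category.assoc, h, IsIso.inv_hom_id_assoc]⟩
  map_id d := by
    apply Subtype.ext
    show (_, _) = (_, _)
    simp
  map_comp f g := by
    apply Subtype.ext
    show (_, _) = (_, _)
    simp

/-!
Every object of the pushout `Q` is `j₀ a` or `j₁ b`, and every morphism between such objects has
a normal form: `j₀ f` for `f : a ⟶ a'`, `j₁ g` for `g : b ⟶ b'`, `j₀ f` followed by the counit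
`j₁ (κ₁ ∂₁ b ⟶ b)` for `f : a ⟶ κ₀ ∂₁ b`, and symmetrically. Normal forms are closed under
composition: a composite `j₀ a ⟶ j₁ b ⟶ j₀ a'` passes through a map `κ₁ ∂₁ b ⟶ κ₁ ∂₀ a'`, which
comes from `C₀₁` because `κ₁` is full. The identifications of objects in `Q` are generated by
`j₀ κ₀ c = j₁ κ₁ c`, and these identities are normal forms by a triangle identity. Hence the
normal forms make up a subcategory through which both legs factor, and by the universal property
of the pushout it is all of `Q`.

In the pullback, `ι a = (a, κ₁ ∂₀ a)` is free on `a` with respect to the first projection, so a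
map out of it is the same as its first component. The functor sends the normal form given by
`f : a ⟶ κ₀ ∂₁ b` to the map whose first component is `f` followed by `κ₀ ∂₁` of the counit,
an isomorphism since `κ₁` is fully faithful; so it is bijective on every hom-set.
-/

theorem CategoryTheory.Adjunction.homEquiv_eq_comp_inv_iff {C D : Type*} [Category C]
    [Category D] {L : C ⥤ D} {R : D ⥤ C} (adj : L ⊣ R) {c : C} {a : D} {d : C}
    [IsIso (adj.unit.app c)] (g : L.obj c ⟶ a) (e : R.obj a ≅ d) (q : c ⟶ d) :
    adj.homEquiv c a g = q ≫ e.inv ↔ R.map g ≫ e.hom = inv (adj.unit.app c) ≫ q := by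
  rw [adj.homEquiv_unit, IsIso.eq_inv_comp, ← Category.assoc, Iso.eq_comp_inv]

theorem CategoryTheory.Functor.map_bijective_of_surjective_param {C D A : Type*} [Category C]
    [Category D] (F : C ⥤ D) {X Y : C} {Φ : A → (X ⟶ Y)} (hΦ : Function.Surjective Φ)
    {X' Y' : D} (e₀ : F.obj X ≅ X') (e₁ : F.obj Y ≅ Y') {Ψ : A → (X' ⟶ Y')}
    (hΨ : Function.Bijective Ψ) (h : ∀ f, e₀.inv ≫ F.map (Φ f) ≫ e₁.hom = Ψ f) :
    Function.Bijective (F.map : (X ⟶ Y) → (F.obj X ⟶ F.obj Y)) := by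
  have hFΦ : F.map ∘ Φ = (e₀.homCongr e₁).symm ∘ Ψ :=
    funext fun f => by simp [← h f]
  have hb : Function.Bijective (F.map ∘ Φ) := hFΦ ▸ (Equiv.bijective _).comp hΨ
  exact (Function.Bijective.of_comp_iff _ ⟨hb.1.of_comp, hΦ⟩).mp hb

def CategoryTheory.WideSubcategory.lift {C D : Type*} [Category C] [Category D]
    (P : MorphismProperty D) [P.IsMultiplicative] (F : C ⥤ D)
    (hF : ∀ {c c' : C} (f : c ⟶ c'), P (F.map f)) : C ⥤ WideSubcategory P where
  obj c := ⟨F.obj c⟩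
  map f := ⟨F.map f, hF f⟩

section CrossHom

variable {C₀₁ C₀ C₁ Q : Type*} [Category C₀₁] [Category C₀] [Category C₁] [Category Q]
  {κ₀ : C₀₁ ⥤ C₀} {κ₁ : C₀₁ ⥤ C₁} {j₀ : C₀ ⥤ Q} {j₁ : C₁ ⥤ Q}

theorem map_map_comp_eqToHom (w : κ₀ ⋙ j₀ = κ₁ ⋙ j₁) {c c' : C₀₁} (u : c ⟶ c') :
    j₀.map (κ₀.map u) ≫ eqToHom (Functor.congr_obj w c') =
      eqToHom (Functor.congr_obj w c) ≫ j₁.map (κ₁.map u) := by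
  have h := Functor.congr_hom w u
  simp only [Functor.comp_map] at h
  simp [h]

variable {r₀ : C₀ ⥤ C₀₁} {r₁ : C₁ ⥤ C₀₁}

/-- With the two sides exchanged (`adj₀`, `w.symm`) this also gives the morphisms `j₁ b ⟶ j₀ a`
of the normal forms. -/
def crossHom (adj₁ : κ₁ ⊣ r₁) (w : κ₀ ⋙ j₀ = κ₁ ⋙ j₁) {a : C₀} {b : C₁}
    (f : a ⟶ κ₀.obj (r₁.obj b)) : j₀.obj a ⟶ j₁.obj b :=
  j₀.map f ≫ eqToHom (Functor.congr_obj w (r₁.obj b)) ≫ j₁.map (adj₁.counit.app b)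

variable (adj₀ : κ₀ ⊣ r₀) (adj₁ : κ₁ ⊣ r₁) (w : κ₀ ⋙ j₀ = κ₁ ⋙ j₁)

theorem map_comp_crossHom {a a' : C₀} {b : C₁} (g : a ⟶ a') (f : a' ⟶ κ₀.obj (r₁.obj b)) :
    j₀.map g ≫ crossHom adj₁ w f = crossHom adj₁ w (g ≫ f) := by
  simp [crossHom]

theorem crossHom_comp_map {a : C₀} {b b' : C₁} (f : a ⟶ κ₀.obj (r₁.obj b)) (g : b ⟶ b') :
    crossHom adj₁ w f ≫ j₁.map g = crossHom adj₁ w (f ≫ κ₀.map (r₁.map g)) := by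
  rw [crossHom, crossHom, Category.assoc, Category.assoc, ← j₁.map_comp,
    ← adj₁.counit_naturality, j₁.map_comp, ← Category.assoc (eqToHom _),
    ← map_map_comp_eqToHom w, j₀.map_comp]
  simp

theorem crossHom_comp_crossHom {a a' : C₀} {b : C₁}
    (f : a ⟶ κ₀.obj (r₁.obj b)) (p : b ⟶ κ₁.obj (r₀.obj a')) (q : r₁.obj b ⟶ r₀.obj a')
    (hq : κ₁.map q = adj₁.counit.app b ≫ p) :
    crossHom adj₁ w f ≫ crossHom adj₀ w.symm p =
      j₀.map (f ≫ κ₀.map q ≫ adj₀.counit.app a') := by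
  rw [crossHom, crossHom, Category.assoc, Category.assoc, ← j₁.map_comp_assoc, ← hq,
    ← Category.assoc (eqToHom _), ← map_map_comp_eqToHom w]
  simp

theorem eqToHom_eq_crossHom (c : C₀₁) :
    eqToHom (Functor.congr_obj w c) = crossHom adj₁ w (κ₀.map (adj₁.unit.app c)) := by
  rw [crossHom, ← Category.assoc, map_map_comp_eqToHom w, Category.assoc, ← j₁.map_comp]
  simp

theorem conj_map_crossHom {D : Type*} [Category D] (F : Q ⥤ D) {G₀ : C₀ ⥤ D} {G₁ : C₁ ⥤ D}
    (h₀ : j₀ ⋙ F ≅ G₀) (h₁ : j₁ ⋙ F ≅ G₁) {a : C₀} {b : C₁} (f : a ⟶ κ₀.obj (r₁.obj b)) :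
    (h₀.app a).inv ≫ F.map (crossHom adj₁ w f) ≫ (h₁.app b).hom =
      G₀.map f ≫ ((h₀.app _).inv ≫ F.map (eqToHom (Functor.congr_obj w (r₁.obj b))) ≫
        (h₁.app _).hom) ≫ G₁.map (adj₁.counit.app b) := by
  rw [← NatIso.naturality_1 h₀ f, ← NatIso.naturality_1 h₁ (adj₁.counit.app b)]
  simp [crossHom]

end CrossHom

section NormalForm

variable {C₀₁ C₀ C₁ Q : Type*} [Category C₀₁] [Category C₀] [Category C₁] [Category Q]
  {κ₀ : C₀₁ ⥤ C₀} {κ₁ : C₀₁ ⥤ C₁} {j₀ : C₀ ⥤ Q} {j₁ : C₁ ⥤ Q} {r₀ : C₀ ⥤ C₀₁} {r₁ : C₁ ⥤ C₀₁}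

abbrev legObj (j₀ : C₀ ⥤ Q) (j₁ : C₁ ⥤ Q) : C₀ ⊕ C₁ → Q :=
  Sum.elim j₀.obj j₁.obj

def IsNormalForm (adj₀ : κ₀ ⊣ r₀) (adj₁ : κ₁ ⊣ r₁) (w : κ₀ ⋙ j₀ = κ₁ ⋙ j₁) :
    ∀ s t : C₀ ⊕ C₁, (legObj j₀ j₁ s ⟶ legObj j₀ j₁ t) → Prop
  | .inl _, .inl _, χ => ∃ f, j₀.map f = χ
  | .inl _, .inr _, χ => ∃ f, crossHom adj₁ w f = χ
  | .inr _, .inl _, χ => ∃ p, crossHom adj₀ w.symm p = χ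
  | .inr _, .inr _, χ => ∃ g, j₁.map g = χ

variable (adj₀ : κ₀ ⊣ r₀) (adj₁ : κ₁ ⊣ r₁) (w : κ₀ ⋙ j₀ = κ₁ ⋙ j₁)

theorem isNormalForm_id (s : C₀ ⊕ C₁) : IsNormalForm adj₀ adj₁ w s s (𝟙 _) := by
  rcases s with a | b
  exacts [⟨𝟙 a, j₀.map_id a⟩, ⟨𝟙 b, j₁.map_id b⟩]

variable {adj₀ adj₁ w} in
theorem IsNormalForm.comp [κ₀.Full] [κ₁.Full] {s t u : C₀ ⊕ C₁}
    {χ : legObj j₀ j₁ s ⟶ legObj j₀ j₁ t} {χ' : legObj j₀ j₁ t ⟶ legObj j₀ j₁ u}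
    (h : IsNormalForm adj₀ adj₁ w s t χ) (h' : IsNormalForm adj₀ adj₁ w t u χ') :
    IsNormalForm adj₀ adj₁ w s u (χ ≫ χ') := by
  rcases s with a | b <;> rcases t with a₁ | b₁ <;> rcases u with a₂ | b₂ <;>
    obtain ⟨f, rfl⟩ := h <;> obtain ⟨g, rfl⟩ := h'
  · exact ⟨f ≫ g, j₀.map_comp f g⟩
  · exact ⟨f ≫ g, (map_comp_crossHom adj₁ w f g).symm⟩
  · exact ⟨_, (crossHom_comp_crossHom adj₀ adj₁ w f g _ (κ₁.map_preimage _)).symm⟩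
  · exact ⟨_, (crossHom_comp_map adj₁ w f g).symm⟩
  · exact ⟨_, (crossHom_comp_map adj₀ w.symm f g).symm⟩
  · exact ⟨_, (crossHom_comp_crossHom adj₁ adj₀ w.symm f g _ (κ₀.map_preimage _)).symm⟩
  · exact ⟨f ≫ g, (map_comp_crossHom adj₀ w.symm f g).symm⟩
  · exact ⟨f ≫ g, j₁.map_comp f g⟩

def ZigzagRel (κ₀ : C₀₁ ⥤ C₀) (κ₁ : C₀₁ ⥤ C₁) (s t : C₀ ⊕ C₁) : Prop :=
  ∃ c, s = .inl (κ₀.obj c) ∧ t = .inr (κ₁.obj c)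

theorem isNormalForm_eqToHom_of_eqvGen [κ₀.Full] [κ₁.Full] {s t : C₀ ⊕ C₁}
    (hst : Relation.EqvGen (ZigzagRel κ₀ κ₁) s t) (h : legObj j₀ j₁ s = legObj j₀ j₁ t) :
    IsNormalForm adj₀ adj₁ w s t (eqToHom h) := by
  let E (s t : C₀ ⊕ C₁) : Prop := ∃ h : legObj j₀ j₁ s = legObj j₀ j₁ t,
    IsNormalForm adj₀ adj₁ w s t (eqToHom h) ∧ IsNormalForm adj₀ adj₁ w t s (eqToHom h.symm)
  have hE : Equivalence E :=
    { refl s := ⟨rfl, isNormalForm_id adj₀ adj₁ w s, isNormalForm_id adj₀ adj₁ w s⟩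
      symm := fun ⟨h, h₁, h₂⟩ => ⟨h.symm, h₂, h₁⟩
      trans := fun ⟨h, h₁, h₂⟩ ⟨h', h₁', h₂'⟩ =>
        ⟨h.trans h', by simpa using h₁.comp h₁', by simpa using h₂'.comp h₂⟩ }
  have hzig : ZigzagRel κ₀ κ₁ ≤ E := by
    rintro _ _ ⟨c, rfl, rfl⟩
    exact ⟨Functor.congr_obj w c, ⟨_, (eqToHom_eq_crossHom adj₁ w c).symm⟩,
      ⟨_, (eqToHom_eq_crossHom adj₀ w.symm c).symm⟩⟩
  obtain ⟨_, hst, -⟩ := hE.eqvGen_iff.mp (Relation.EqvGen.mono hzig s t hst)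
  exact hst

end NormalForm

namespace CategoryTheory.IsPushout

variable {Q : Type u} [SmallCategory Q] {κ₀ : C01 ⥤ C0} {κ₁ : C01 ⥤ C1}
  {j₀ : C0 ⥤ Q} {j₁ : C1 ⥤ Q}
  (hpo : IsPushout (C := Cat.{u, u}) (Z := Cat.of C01) (X := Cat.of C0) (Y := Cat.of C1)
    (P := Cat.of Q) κ₀.toCatHom κ₁.toCatHom j₀.toCatHom j₁.toCatHom)
include hpo

theorem functor_comp_eq : κ₀ ⋙ j₀ = κ₁ ⋙ j₁ :=
  congrArg Cat.Hom.toFunctor hpo.w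

theorem exists_comp_eq_id {S : Type u} [SmallCategory S] (ι : S ⥤ Q) (l₀ : C0 ⥤ S)
    (l₁ : C1 ⥤ S) (hl : κ₀ ⋙ l₀ = κ₁ ⋙ l₁) (h₀ : l₀ ⋙ ι = j₀) (h₁ : l₁ ⋙ ι = j₁) :
    ∃ D : Q ⥤ S, D ⋙ ι = 𝟭 Q := by
  let D := hpo.desc l₀.toCatHom l₁.toCatHom (congrArg Functor.toCatHom hl)
  have hD₀ : j₀.toCatHom ≫ D = l₀.toCatHom := hpo.inl_desc _ _ _
  have hD₁ : j₁.toCatHom ≫ D = l₁.toCatHom := hpo.inr_desc _ _ _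
  refine ⟨D.toFunctor, congrArg Cat.Hom.toFunctor
    (hpo.hom_ext (k := D ≫ ι.toCatHom) (l := 𝟙 _) ?_ ?_)⟩
  · rw [← Category.assoc, hD₀]
    exact congrArg Functor.toCatHom h₀
  · rw [← Category.assoc, hD₁]
    exact congrArg Functor.toCatHom h₁

theorem obj_induction (O : ObjectProperty Q) (h₀ : ∀ a, O (j₀.obj a)) (h₁ : ∀ b, O (j₁.obj b))
    (x : Q) : O x := by
  obtain ⟨D, hD⟩ := hpo.exists_comp_eq_id O.ι (O.lift j₀ h₀) (O.lift j₁ h₁)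
    (by
      change O.lift (κ₀ ⋙ j₀) _ = O.lift (κ₁ ⋙ j₁) _
      congr 1
      exact hpo.functor_comp_eq) rfl rfl
  have hx : (D.obj x).obj = x := Functor.congr_obj hD x
  exact hx ▸ (D.obj x).property

theorem hom_induction (P : MorphismProperty Q) [P.IsMultiplicative]
    (h₀ : ∀ {a a' : C0} (f : a ⟶ a'), P (j₀.map f))
    (h₁ : ∀ {b b' : C1} (g : b ⟶ b'), P (j₁.map g))
    {x y : Q} (φ : x ⟶ y) : P φ := by
  obtain ⟨D, hD⟩ := hpo.exists_comp_eq_id (wideSubcategoryInclusion P)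
    (WideSubcategory.lift P j₀ h₀) (WideSubcategory.lift P j₁ h₁)
    (by
      change WideSubcategory.lift P (κ₀ ⋙ j₀) _ = WideSubcategory.lift P (κ₁ ⋙ j₁) _
      congr 1
      exact hpo.functor_comp_eq) rfl rfl
  have hP : ∀ {x y : Q} (f : x ⟶ y), P ((D ⋙ wideSubcategoryInclusion P).map f) :=
    fun f => (D.map f).property
  rw [hD] at hP
  exact hP φ

theorem eqvGen_of_obj_eq {s t : C0 ⊕ C1} (h : legObj j₀ j₁ s = legObj j₀ j₁ t) :
    Relation.EqvGen (ZigzagRel κ₀ κ₁) s t := by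
  -- Any map of objects into a codiscrete category is a functor, so `Q` maps to zigzag classes.
  let Z := ULiftHom.{u} (Codiscrete (Quot (ZigzagRel κ₀ κ₁)))
  let cls (z : Z) : Quot (ZigzagRel κ₀ κ₁) := (ULiftHom.objDown z).as
  let l₀ : C0 ⥤ Z := Codiscrete.functor (fun a => Quot.mk _ (.inl a)) ⋙ ULiftHom.up
  let l₁ : C1 ⥤ Z := Codiscrete.functor (fun b => Quot.mk _ (.inr b)) ⋙ ULiftHom.up
  have hl : κ₀ ⋙ l₀ = κ₁ ⋙ l₁ :=
    Functor.ext (fun c => congrArg (fun q => ULiftHom.objUp (Codiscrete.mk q))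
      (Quot.sound ⟨c, rfl, rfl⟩)) (fun _ _ _ => rfl)
  let D := hpo.desc l₀.toCatHom l₁.toCatHom (congrArg Functor.toCatHom hl)
  have hD₀ : j₀ ⋙ D.toFunctor = l₀ := congrArg Cat.Hom.toFunctor (hpo.inl_desc _ _ _)
  have hD₁ : j₁ ⋙ D.toFunctor = l₁ := congrArg Cat.Hom.toFunctor (hpo.inr_desc _ _ _)
  have hD : ∀ s, cls (D.toFunctor.obj (legObj j₀ j₁ s)) = Quot.mk _ s := by
    rintro (a | b)
    · exact congrArg cls (Functor.congr_obj hD₀ a)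
    · exact congrArg cls (Functor.congr_obj hD₁ b)
  exact Quot.eqvGen_exact
    ((hD s).symm.trans ((congrArg (cls ∘ D.toFunctor.obj) h).trans (hD t)))

theorem exists_legObj_eq (x : Q) : ∃ s, legObj j₀ j₁ s = x :=
  hpo.obj_induction (fun x => ∃ s, legObj j₀ j₁ s = x) (fun a => ⟨.inl a, rfl⟩)
    (fun b => ⟨.inr b, rfl⟩) x

theorem isNormalForm [κ₀.Full] [κ₁.Full] {r₀ : C0 ⥤ C01} {r₁ : C1 ⥤ C01}
    (adj₀ : κ₀ ⊣ r₀) (adj₁ : κ₁ ⊣ r₁) {s t : C0 ⊕ C1} (φ : legObj j₀ j₁ s ⟶ legObj j₀ j₁ t) :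
    IsNormalForm adj₀ adj₁ hpo.functor_comp_eq s t φ := by
  have w := hpo.functor_comp_eq
  have hconj : ∀ {s s' t t' : C0 ⊕ C1} (hs : legObj j₀ j₁ s = legObj j₀ j₁ s')
      (ht : legObj j₀ j₁ t = legObj j₀ j₁ t') {χ}, IsNormalForm adj₀ adj₁ w s' t' χ →
      IsNormalForm adj₀ adj₁ w s t (eqToHom hs ≫ χ ≫ eqToHom ht.symm) :=
    fun hs ht _ hχ =>
      (isNormalForm_eqToHom_of_eqvGen adj₀ adj₁ w (hpo.eqvGen_of_obj_eq hs) hs).comp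
        (hχ.comp (isNormalForm_eqToHom_of_eqvGen adj₀ adj₁ w
          (hpo.eqvGen_of_obj_eq ht.symm) ht.symm))
  -- Changing the representatives of the end points preserves normal forms (`hconj`), so the
  -- morphisms in normal form for all representatives form a wide subcategory.
  let P : MorphismProperty Q := fun x y φ => ∀ s t (hs : legObj j₀ j₁ s = x)
    (ht : legObj j₀ j₁ t = y), IsNormalForm adj₀ adj₁ w s t (eqToHom hs ≫ φ ≫ eqToHom ht.symm)
  have : P.IsMultiplicative :=
    { id_mem x s t hs ht := by
        subst hs
        simpa using hconj rfl ht (isNormalForm_id adj₀ adj₁ w s)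
      comp_mem {x y z} φ ψ hφ hψ s u hs hu := by
        obtain ⟨t, rfl⟩ := hpo.exists_legObj_eq y
        simpa using (hφ s t hs rfl).comp (hψ t u rfl hu) }
  simpa using hpo.hom_induction P
    (fun f s t hs ht => hconj (s' := .inl _) (t' := .inl _) hs ht ⟨f, rfl⟩)
    (fun g s t hs ht => hconj (s' := .inr _) (t' := .inr _) hs ht ⟨g, rfl⟩) φ s t rfl rfl

end CategoryTheory.IsPushout

namespace PsPullback

variable {r₀ : C0 ⥤ C01} {r₁ : C1 ⥤ C01}

theorem hom_ext {x y : PsPullback r₀ r₁} {f g : x ⟶ y} (h₁ : f.1.1 = g.1.1)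
    (h₂ : f.1.2 = g.1.2) : f = g :=
  Subtype.ext (Prod.ext h₁ h₂)

def fst : PsPullback r₀ r₁ ⥤ C0 where
  obj x := x.left
  map f := f.1.1
  map_id _ := rfl
  map_comp _ _ := rfl

def snd : PsPullback r₀ r₁ ⥤ C1 where
  obj x := x.right
  map f := f.1.2
  map_id _ := rfl
  map_comp _ _ := rfl

end PsPullback

section Iota

variable {κ₀ : C01 ⥤ C0} {κ₁ : C01 ⥤ C1} [κ₀.Full] [κ₀.Faithful] [κ₁.Full] [κ₁.Faithful]
  {r₀ : C0 ⥤ C01} {r₁ : C1 ⥤ C01} (adj₀ : κ₀ ⊣ r₀) (adj₁ : κ₁ ⊣ r₁)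

def iotaLeftHomEquiv (a : C0) (X : PsPullback r₀ r₁) :
    ((iotaLeft r₀ adj₁).obj a ⟶ X) ≃ (a ⟶ X.left) where
  toFun g := g.1.1
  invFun f := ⟨(f, (adj₁.homEquiv _ _).symm (r₀.map f ≫ X.iso.hom)),
    ((adj₁.homEquiv_unit _ _ _).symm.trans (Equiv.apply_symm_apply _ _)).symm⟩
  left_inv g := PsPullback.hom_ext rfl ((Equiv.symm_apply_eq _).mpr
    (g.2.trans (adj₁.homEquiv_unit _ _ _).symm))
  right_inv _ := rfl

def iotaRightHomEquiv (b : C1) (X : PsPullback r₀ r₁) :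
    ((iotaRight adj₀ r₁).obj b ⟶ X) ≃ (b ⟶ X.right) where
  toFun g := g.1.2
  invFun p := ⟨((adj₀.homEquiv _ _).symm (r₁.map p ≫ X.iso.inv), p),
    (adj₀.homEquiv_eq_comp_inv_iff _ X.iso _).mp (Equiv.apply_symm_apply _ _)⟩
  left_inv g := PsPullback.hom_ext ((Equiv.symm_apply_eq _).mpr
    ((adj₀.homEquiv_eq_comp_inv_iff _ X.iso _).mpr g.2).symm) rfl
  right_inv _ := rfl

theorem bijective_iotaLeft_map_comp {a a' : C0} {X : PsPullback r₀ r₁}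
    (N : (iotaLeft r₀ adj₁).obj a' ⟶ X) [IsIso (PsPullback.fst.map N)] :
    Function.Bijective fun f : a ⟶ a' => (iotaLeft r₀ adj₁).map f ≫ N := by
  have : (fun f : a ⟶ a' => (iotaLeft r₀ adj₁).map f ≫ N) =
      (asIso (PsPullback.fst.map N)).homToEquiv.trans
        (iotaLeftHomEquiv adj₁ a X).symm := by
    funext f
    exact ((iotaLeftHomEquiv adj₁ a X).eq_symm_apply).mpr rfl
  exact this ▸ Equiv.bijective _

theorem bijective_iotaRight_map_comp {b b' : C1} {X : PsPullback r₀ r₁}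
    (N : (iotaRight adj₀ r₁).obj b' ⟶ X) [IsIso (PsPullback.snd.map N)] :
    Function.Bijective fun g : b ⟶ b' => (iotaRight adj₀ r₁).map g ≫ N := by
  have : (fun g : b ⟶ b' => (iotaRight adj₀ r₁).map g ≫ N) =
      (asIso (PsPullback.snd.map N)).homToEquiv.trans
        (iotaRightHomEquiv adj₀ b X).symm := by
    funext g
    exact ((iotaRightHomEquiv adj₀ b X).eq_symm_apply).mpr rfl
  exact this ▸ Equiv.bijective _

theorem isIso_fst_map_comp_iotaRight_map_counit {X : PsPullback r₀ r₁} {b : C1}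
    (M : X ⟶ (iotaRight adj₀ r₁).obj (κ₁.obj (r₁.obj b))) [IsIso M] :
    IsIso (PsPullback.fst.map (M ≫ (iotaRight adj₀ r₁).map (adj₁.counit.app b))) := by
  -- `r₁.map (adj₁.counit.app b)` is invertible because `κ₁` is fully faithful.
  rw [Functor.map_comp]
  exact IsIso.comp_isIso' inferInstance (inferInstanceAs (IsIso (κ₀.map (r₁.map _))))

theorem isIso_snd_map_comp_iotaLeft_map_counit {X : PsPullback r₀ r₁} {a : C0}
    (M : X ⟶ (iotaLeft r₀ adj₁).obj (κ₀.obj (r₀.obj a))) [IsIso M] :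
    IsIso (PsPullback.snd.map (M ≫ (iotaLeft r₀ adj₁).map (adj₀.counit.app a))) := by
  rw [Functor.map_comp]
  exact IsIso.comp_isIso' inferInstance (inferInstanceAs (IsIso (κ₁.map (r₀.map _))))

end Iota

theorem map_bijective_legObj {Q : Type u} [SmallCategory Q]
    {κ₀ : C01 ⥤ C0} {κ₁ : C01 ⥤ C1} [κ₀.Full] [κ₀.Faithful] [κ₁.Full] [κ₁.Faithful]
    {r₀ : C0 ⥤ C01} {r₁ : C1 ⥤ C01} (adj₀ : κ₀ ⊣ r₀) (adj₁ : κ₁ ⊣ r₁)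
    {j₀ : C0 ⥤ Q} {j₁ : C1 ⥤ Q}
    (hpo : IsPushout (C := Cat.{u, u}) (Z := Cat.of C01) (X := Cat.of C0) (Y := Cat.of C1)
      (P := Cat.of Q) κ₀.toCatHom κ₁.toCatHom j₀.toCatHom j₁.toCatHom)
    (F : Q ⥤ PsPullback r₀ r₁)
    (h₀ : j₀ ⋙ F ≅ iotaLeft r₀ adj₁) (h₁ : j₁ ⋙ F ≅ iotaRight adj₀ r₁) (s t : C0 ⊕ C1) :
    Function.Bijective (F.map : (legObj j₀ j₁ s ⟶ legObj j₀ j₁ t) → _) := by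
  have w := hpo.functor_comp_eq
  rcases s with a | b <;> rcases t with a' | b'
  · exact F.map_bijective_of_surjective_param (hpo.isNormalForm adj₀ adj₁) (h₀.app a)
      (h₀.app a') (bijective_iotaLeft_map_comp adj₁ (𝟙 _))
      (fun f => (NatIso.naturality_1 h₀ f).trans (Category.comp_id _).symm)
  · have := isIso_fst_map_comp_iotaRight_map_counit adj₀ adj₁
      ((h₀.app _).inv ≫ F.map (eqToHom (Functor.congr_obj w (r₁.obj b'))) ≫ (h₁.app _).hom)
    exact F.map_bijective_of_surjective_param (hpo.isNormalForm adj₀ adj₁) (h₀.app a)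
      (h₁.app b') (bijective_iotaLeft_map_comp adj₁ _) (conj_map_crossHom adj₁ w F h₀ h₁)
  · have := isIso_snd_map_comp_iotaLeft_map_counit adj₀ adj₁
      ((h₁.app _).inv ≫ F.map (eqToHom (Functor.congr_obj w.symm (r₀.obj a'))) ≫ (h₀.app _).hom)
    exact F.map_bijective_of_surjective_param (hpo.isNormalForm adj₀ adj₁) (h₁.app b)
      (h₀.app a') (bijective_iotaRight_map_comp adj₀ _) (conj_map_crossHom adj₀ w.symm F h₁ h₀)
  · exact F.map_bijective_of_surjective_param (hpo.isNormalForm adj₀ adj₁) (h₁.app b)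
      (h₁.app b') (bijective_iotaRight_map_comp adj₀ (𝟙 _))
      (fun g => (NatIso.naturality_1 h₁ g).trans (Category.comp_id _).symm)

/-- Let `κᵢ : C₀₁ → Cᵢ` (`i = 0,1`) be fully faithful functors admitting right adjoints
`rᵢ = ∂ᵢ : Cᵢ → C₀₁`. Then the canonical functor `ι` from the pushout `C₀ ⊔_{C₀₁} C₁` of
the `κᵢ` (here: any category `Q` exhibited as this pushout in `Cat`) to the pseudo-pullback
`C₀ ×_{C₀₁} C₁` of the `rᵢ`, induced by `(id, κ₁ ∂₀)` on `C₀` and `(κ₀ ∂₁, id)` on `C₁`,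
is fully faithful. -/
theorem pushout_to_pullback_fullyFaithful
    {Q : Type u} [SmallCategory Q]
    (κ₀ : C01 ⥤ C0) (κ₁ : C01 ⥤ C1)
    [κ₀.Full] [κ₀.Faithful] [κ₁.Full] [κ₁.Faithful]
    (r₀ : C0 ⥤ C01) (r₁ : C1 ⥤ C01) (adj₀ : κ₀ ⊣ r₀) (adj₁ : κ₁ ⊣ r₁)
    (j₀ : C0 ⥤ Q) (j₁ : C1 ⥤ Q)
    (hpo : IsPushout (C := Cat.{u, u}) (Z := Cat.of C01) (X := Cat.of C0) (Y := Cat.of C1)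
      (P := Cat.of Q) κ₀.toCatHom κ₁.toCatHom j₀.toCatHom j₁.toCatHom)
    (F : Q ⥤ PsPullback r₀ r₁)
    (h₀ : j₀ ⋙ F ≅ iotaLeft r₀ adj₁) (h₁ : j₁ ⋙ F ≅ iotaRight adj₀ r₁) :
    F.Full ∧ F.Faithful := by
  have hbij (x y : Q) : Function.Bijective (F.map : (x ⟶ y) → _) := by
    obtain ⟨s, rfl⟩ := hpo.exists_legObj_eq x
    obtain ⟨t, rfl⟩ := hpo.exists_legObj_eq y
    exact map_bijective_legObj adj₀ adj₁ hpo F h₀ h₁ s t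
  exact ⟨⟨(hbij _ _).2⟩, ⟨fun h => (hbij _ _).1 h⟩⟩
end
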